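/- arXiv:2004.11004 — 5 statements merged into one kernel-verified Lean document; each statement's English description precedes it below -/
import Mathlib

section
/- Let G be a linearly ordered abelian group, let β₁,…,β_m ∈ G, let λ be a limit ordinal, and let (γ_s)_{s<λ} be a strictly increasing family in G with no last element. Let t₁,…,t_m be pairwise distinct integers. Then there exist an ordinal ν < λ and an index r with 1 ≤ r ≤ m such that for all i ≠ r and all s with ν < s < λ, one has β_i + t_i·γ_s > β_r + t_r·γ_s. -/
/-!
For `t_j < t_i` the difference `(β_i + t_i • γ_s) - (β_j + t_j • γ_s)` is strictly increasing
in `s`, so as `s → λ⁻` it is either negative throughout or eventually positive: any two of the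
affine functions are eventually strictly comparable. "Eventually smaller" is then a strict total
order on the finitely many indices, and its least element is eventually strictly minimal.
-/

open Filter Set Topology

theorem Order.IsSuccLimit.nhdsLT_neBot {α : Type*} [LinearOrder α] [TopologicalSpace α]
    [OrderTopology α] {a : α} (ha : Order.IsSuccLimit a) : (𝓝[<] a).NeBot := by
  obtain ⟨b, hb⟩ := not_isMin_iff.1 ha.not_isMin
  refine forall_mem_nonempty_iff_neBot.1 fun s hs => ?_
  obtain ⟨l, hl, hls⟩ := (mem_nhdsLT_iff_exists_Ioo_subset' hb).1 hs
  obtain ⟨c, hca, hlc⟩ := ha.lt_iff_exists_lt.1 hl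
  exact ⟨c, hls ⟨hlc, hca⟩⟩

theorem StrictMonoOn.eventually_lt_or_eventually_gt_nhdsLT {α β : Type*} [LinearOrder α]
    [TopologicalSpace α] [OrderTopology α] [LinearOrder β] {a : α} {d : α → β}
    (hd : StrictMonoOn d (Iio a)) (c : β) :
    (∀ᶠ s in 𝓝[<] a, d s < c) ∨ ∀ᶠ s in 𝓝[<] a, c < d s := by
  by_cases h : ∃ s₀ < a, c ≤ d s₀
  · obtain ⟨s₀, hs₀, hc⟩ := h
    right
    filter_upwards [Ioo_mem_nhdsLT hs₀] with s hs
    exact hc.trans_lt (hd hs₀ hs.2 hs.1)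
  · push Not at h
    left
    filter_upwards [self_mem_nhdsWithin] with s hs using h s hs

section AffineFunctions

variable {α G : Type*} [AddCommGroup G] [LinearOrder G] [IsOrderedAddMonoid G]
  {γ : α → G} {S : Set α}

theorem StrictMonoOn.add_zsmul_sub_add_zsmul [Preorder α] (hγ : StrictMonoOn γ S) (a b : G)
    {p q : ℤ} (hpq : p < q) : StrictMonoOn (fun x => (b + q • γ x) - (a + p • γ x)) S := by
  have hform (x : α) : (b + q • γ x) - (a + p • γ x) = (b - a) + (q - p) • γ x := by
    rw [sub_zsmul]; abel
  intro x hx y hy hxy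
  simpa only [hform] using
    add_lt_add_right (zsmul_lt_zsmul_right (sub_pos.2 hpq) (hγ hx hy hxy)) (b - a)

theorem eventually_add_zsmul_lt_or_eventually_gt [LinearOrder α] [TopologicalSpace α]
    [OrderTopology α] {lam : α} (hγ : StrictMonoOn γ (Iio lam)) (a b : G) {p q : ℤ}
    (hpq : p < q) :
    (∀ᶠ s in 𝓝[<] lam, a + p • γ s < b + q • γ s) ∨
      ∀ᶠ s in 𝓝[<] lam, b + q • γ s < a + p • γ s :=
  ((hγ.add_zsmul_sub_add_zsmul a b hpq).eventually_lt_or_eventually_gt_nhdsLT 0).symm.imp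
    (fun h => h.mono fun _ => sub_pos.1) (fun h => h.mono fun _ => sub_neg.1)

end AffineFunctions

theorem Filter.exists_eventually_forall_lt_of_pairwise {ι α β : Type*} [Finite ι] [Nonempty ι]
    [Preorder β] {l : Filter α} [l.NeBot] (f : ι → α → β)
    (h : ∀ i j, i ≠ j → (∀ᶠ s in l, f i s < f j s) ∨ ∀ᶠ s in l, f j s < f i s) :
    ∃ r, ∀ᶠ s in l, ∀ i, i ≠ r → f r s < f i s := by
  let R : ι → ι → Prop := fun i j => ∀ᶠ s in l, f i s < f j s
  have : IsTrans ι R := ⟨fun _ _ _ hij hjk => (hij.and hjk).mono fun _ hs => hs.1.trans hs.2⟩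
  have : Std.Irrefl R := ⟨fun _ hii => hii.exists.elim fun _ hs => lt_irrefl _ hs⟩
  obtain ⟨r, -, hr⟩ := (Finite.wellFounded_of_trans_of_irrefl R).has_min univ univ_nonempty
  refine ⟨r, eventually_all.2 fun i => ?_⟩
  by_cases hi : i = r
  · exact Eventually.of_forall fun _ hne => absurd hi hne
  · exact ((h r i (Ne.symm hi)).resolve_right (hr i (mem_univ i))).mono fun _ hs _ => hs

/-- **Ostrowski's lemma, second statement.**
Among the functions `s ↦ β_i + t_i • γ_s` (with pairwise distinct integers `t_i`),
one index `r` is eventually strictly minimal: there are `ν < λ` and `r` such that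
`β_i + t_i • γ_s > β_r + t_r • γ_s` for all `i ≠ r` and all `ν < s < λ`. -/
theorem ostrowski_min {G : Type*} [AddCommGroup G] [LinearOrder G] [IsOrderedAddMonoid G]
    (m : ℕ) (hm : 0 < m) (β : Fin m → G)
    (lam : Ordinal) (hlam : Order.IsSuccLimit lam)
    (γ : Ordinal → G)
    (hγ : ∀ s s' : Ordinal, s < s' → s' < lam → γ s < γ s')
    (t : Fin m → ℤ) (ht : Function.Injective t) :
    ∃ ν : Ordinal, ν < lam ∧ ∃ r : Fin m, ∀ i : Fin m, i ≠ r →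
      ∀ s : Ordinal, ν < s → s < lam →
        β r + t r • γ s < β i + t i • γ s := by
  have := hlam.nhdsLT_neBot
  have : Nonempty (Fin m) := ⟨⟨0, hm⟩⟩
  have hγ' : StrictMonoOn γ (Iio lam) := fun s _ s' hs' hss' => hγ s s' hss' hs'
  obtain ⟨r, hr⟩ := exists_eventually_forall_lt_of_pairwise (fun i s => β i + t i • γ s)
    fun i j hij => (ht.ne hij).lt_or_gt.elim
      (fun h => eventually_add_zsmul_lt_or_eventually_gt hγ' (β i) (β j) h)
      (fun h => (eventually_add_zsmul_lt_or_eventually_gt hγ' (β j) (β i) h).symm)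
  obtain ⟨ν, hν, hsub⟩ := (mem_nhdsLT_iff_exists_Ioo_subset' hlam.pos).1 hr
  exact ⟨ν, hν, r, fun i hi s hνs hs => hsub ⟨hνs, hs⟩ i hi⟩
end

section
/- Let V ⊆ V' be an immediate extension of valuation rings with fraction fields K ⊆ K', and let (v_i)_{i<λ} be an algebraic pseudo convergent sequence in K which has a pseudo limit x ∈ V' algebraic over K but no pseudo limit in K. If h = Irr(x, K) (the minimal polynomial of x over K) lies in V[X], then val(h(v_i)) < val(h(v_j)) for all sufficiently large i < j < λ. -/
open Polynomial

section ValuationDefs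

variable {Γ : Type*} [AddCommGroup Γ] [LinearOrder Γ] [IsOrderedAddMonoid Γ] {K : Type*} [Field K]

/-- `val` is an (additive, Krull) valuation on the field `K` with values in
`WithTop Γ`: `val 0 = ⊤`, nonzero elements have values in `Γ`, `val` is
multiplicative-to-additive and satisfies the ultrametric inequality.
The valuation ring is `{x | 0 ≤ val x}`. -/
def IsAddValuation (val : K → WithTop Γ) : Prop :=
  val 0 = ⊤ ∧ (∀ x : K, x ≠ 0 → val x ≠ ⊤) ∧
    (∀ x y : K, val (x * y) = val x + val y) ∧
    ∀ x y : K, min (val x) (val y) ≤ val (x + y)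

/-- The valuation ring of the subfield `K₀` gives an immediate extension inside
the valued field `K`: the inclusion induces isomorphisms on value groups and on
residue fields. -/
def IsImmediate (val : K → WithTop Γ) (K₀ : Subfield K) : Prop :=
  (∀ x : K, x ≠ 0 → ∃ y ∈ K₀, val y = val x) ∧
    ∀ x : K, val x = 0 → ∃ y ∈ K₀, 0 < val (x - y)

/-- `(v i)_{i < lam}` is a pseudo convergent sequence:
`val (v i - v i'') < val (v i' - v i'')` for `i < i' < i'' < lam`. -/
def PseudoConvergent (val : K → WithTop Γ) (lam : Ordinal) (v : Ordinal → K) : Prop :=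
  ∀ i i' i'' : Ordinal, i < i' → i' < i'' → i'' < lam →
    val (v i - v i'') < val (v i' - v i'')

/-- `x` is a pseudo limit of `(v i)_{i < lam}`: `val (x - v i)` is strictly
increasing in `i`. -/
def IsPseudoLimit (val : K → WithTop Γ) (lam : Ordinal) (v : Ordinal → K) (x : K) : Prop :=
  ∀ i i' : Ordinal, i < i' → i' < lam → val (x - v i) < val (x - v i')

/-- the polynomial `f` has all its coefficients in the valuation ring of the
subfield `K₀`, i.e. `f ∈ V[X]` where `V = K₀ ∩ {0 ≤ val}`. -/
def CoeffsIn (val : K → WithTop Γ) (K₀ : Subfield K) (f : Polynomial K) : Prop :=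
  ∀ n : ℕ, f.coeff n ∈ K₀ ∧ 0 ≤ val (f.coeff n)

/-- the values of `f` along the sequence `v` are eventually strictly
increasing (witnessing that `v` is algebraic via `f`). -/
def EvIncreasing (val : K → WithTop Γ) (lam : Ordinal) (v : Ordinal → K)
    (f : Polynomial K) : Prop :=
  ∃ ν : Ordinal, ν < lam ∧ ∀ i i' : Ordinal, ν < i → i < i' → i' < lam →
    val (f.eval (v i)) < val (f.eval (v i'))

end ValuationDefs

/-!
Expand `h` around its root `x`: with `g = taylor x h` we have `g.coeff 0 = 0` and
`h (v i) = ∑_{k ≥ 1} g.coeff k * (v i - x) ^ k`. Writing `γ i = val (v i - x)`, which is strictly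
increasing because `x` is a pseudo limit, the `k`-th term has value `val (g.coeff k) + k • γ i`,
strictly increasing in `i`. Two of these affine functions of `γ i` with different slopes agree for
at most one `i`, so beyond some `ν < λ` the minimum is attained by a single term. From then on
`val (h (v i))` equals the minimum of finitely many strictly increasing functions of `i`.
-/

open Filter Set

namespace IsAddValuation

variable {Γ : Type*} [AddCommGroup Γ] [LinearOrder Γ] [IsOrderedAddMonoid Γ] {K : Type*} [Field K]
  {val : K → WithTop Γ}

theorem map_one (hval : IsAddValuation val) : val 1 = 0 := by
  have h := hval.2.2.1 1 1
  rw [mul_one] at h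
  lift val 1 to Γ using hval.2.1 1 one_ne_zero with a
  norm_cast at h ⊢
  exact left_eq_add.mp h

theorem exists_addValuation_eq (hval : IsAddValuation val) :
    ∃ w : AddValuation K (WithTop Γ), ⇑w = val :=
  ⟨AddValuation.of val hval.1 hval.map_one hval.2.2.2 hval.2.2.1, rfl⟩

end IsAddValuation

theorem AddValuation.map_sum_eq_inf' {R Γ₀ ι : Type*} [Ring R]
    [LinearOrderedAddCommMonoidWithTop Γ₀]
    (v : AddValuation R Γ₀) {s : Finset ι} (hs : s.Nonempty) {f : ι → R}
    (hinj : InjOn (fun i => v (f i)) s) (htop : ∀ i ∈ s, v (f i) ≠ ⊤) :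
    v (∑ i ∈ s, f i) = s.inf' hs (fun i => v (f i)) := by
  classical
  obtain ⟨j, hj, hmin⟩ := s.exists_mem_eq_inf' hs (fun i => v (f i))
  rw [hmin, Finset.sum_eq_add_sum_sdiff_singleton_of_mem hj]
  refine v.map_add_eq_of_lt_left (v.map_lt_sum (htop j hj) fun i hi => ?_)
  obtain ⟨his, hij⟩ : i ∈ s ∧ i ≠ j := by simpa using hi
  exact lt_of_le_of_ne (hmin ▸ s.inf'_le _ his) fun h => hij (hinj his hj h.symm)

theorem Finset.strictMonoOn_inf' {ι α β : Type*} [LinearOrder α] [Preorder β] {s : Finset ι}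
    (hs : s.Nonempty) {f : ι → β → α} {t : Set β} (hf : ∀ k ∈ s, StrictMonoOn (f k) t) :
    StrictMonoOn (fun b => s.inf' hs (f · b)) t := by
  intro a ha b hb hab
  obtain ⟨k, hk, hmin⟩ := s.exists_mem_eq_inf' hs (f · b)
  simp only [hmin]
  exact (s.inf'_le _ hk).trans_lt (hf k hk ha hb hab)

section WithTopNSMul

variable {Γ : Type*} [AddCommGroup Γ] [LinearOrder Γ] [IsOrderedAddMonoid Γ]

theorem WithTop.add_nsmul_lt_add_nsmul {a b c : WithTop Γ} (ha : a ≠ ⊤) (hc : c ≠ ⊤) {k : ℕ}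
    (hk : k ≠ 0) (hbc : b < c) : a + k • b < a + k • c := by
  lift a to Γ using ha
  lift b to Γ using hbc.ne_top
  lift c to Γ using hc
  norm_cast at hbc ⊢
  gcongr

theorem WithTop.eq_of_add_nsmul_eq_add_nsmul {a b c d : WithTop Γ} (ha : a ≠ ⊤) (hb : b ≠ ⊤)
    (hc : c ≠ ⊤) (hd : d ≠ ⊤) {k l : ℕ} (hkl : k ≠ l)
    (hc' : a + k • c = b + l • c) (hd' : a + k • d = b + l • d) : c = d := by
  lift a to Γ using ha
  lift b to Γ using hb
  lift c to Γ using hc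
  lift d to Γ using hd
  norm_cast at hc' hd' ⊢
  have hsolve : ∀ e : Γ, a + k • e = b + l • e → ((k : ℤ) - l) • e = b - a := by
    intro e he
    rw [sub_zsmul, natCast_zsmul, natCast_zsmul, ← sub_eq_add_neg, sub_eq_sub_iff_add_eq_add,
      add_comm, he]
  exact zsmul_right_injective (sub_ne_zero.mpr (Nat.cast_injective.ne hkl))
    ((hsolve c hc').trans (hsolve d hd').symm)

end WithTopNSMul

namespace Ordinal

def tailsBelow (lam : Ordinal) : Filter Ordinal :=
  ⨅ ν ∈ Iio lam, 𝓟 (Ioo ν lam)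

variable {lam : Ordinal}

theorem hasBasis_tailsBelow (hlam : 0 < lam) :
    (tailsBelow lam).HasBasis (· < lam) (Ioo · lam) :=
  hasBasis_biInf_principal
    (fun a ha b hb => ⟨max a b, mem_Iio.2 (max_lt ha hb), Ioo_subset_Ioo_left (le_max_left a b),
      Ioo_subset_Ioo_left (le_max_right a b)⟩) ⟨0, hlam⟩

theorem eventually_tailsBelow_iff (hlam : 0 < lam) {p : Ordinal → Prop} :
    (∀ᶠ i in tailsBelow lam, p i) ↔ ∃ ν < lam, ∀ i, ν < i → i < lam → p i := by
  simp [(hasBasis_tailsBelow hlam).eventually_iff, mem_Ioo, and_imp]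

theorem eventually_lt_tailsBelow (hlam : 0 < lam) : ∀ᶠ i in tailsBelow lam, i < lam :=
  (eventually_tailsBelow_iff hlam).mpr ⟨0, hlam, fun _ _ h => h⟩

theorem eventually_not_tailsBelow_of_subsingleton (hlam : 0 < lam) {p : Ordinal → Prop}
    (hp : (Iio lam ∩ {i | p i}).Subsingleton) : ∀ᶠ i in tailsBelow lam, ¬ p i := by
  by_cases h : ∃ i₀ < lam, p i₀
  · obtain ⟨i₀, hi₀, hp₀⟩ := h
    exact (eventually_tailsBelow_iff hlam).mpr
      ⟨i₀, hi₀, fun i hi₀i hi hpi => hi₀i.ne (hp ⟨hi₀, hp₀⟩ ⟨hi, hpi⟩)⟩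
  · push Not at h
    exact (eventually_lt_tailsBelow hlam).mono h

theorem exists_forall_lt_of_eventuallyEq {α : Type*} [Preorder α] (hlam : 0 < lam)
    {f F : Ordinal → α} (hF : StrictMonoOn F (Iio lam)) (hfF : f =ᶠ[tailsBelow lam] F) :
    ∃ ν < lam, ∀ i j, ν < i → i < j → j < lam → f i < f j := by
  obtain ⟨ν, hν, hfF⟩ := (eventually_tailsBelow_iff hlam).mp hfF
  refine ⟨ν, hν, fun i j hνi hij hj => ?_⟩
  rw [hfF i hνi (hij.trans hj), hfF j (hνi.trans hij) hj]
  exact hF (hij.trans hj) hj hij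

end Ordinal

open Ordinal in
theorem AddValuation.evIncreasing_of_coeff_zero {Γ K : Type*} [AddCommGroup Γ] [LinearOrder Γ]
    [IsOrderedAddMonoid Γ] [Field K] (v : AddValuation K (WithTop Γ)) {lam : Ordinal}
    (hlam : 0 < lam) {g : K[X]} (hg : g ≠ 0) (hg0 : g.coeff 0 = 0) {y : Ordinal → K}
    (hy : StrictMonoOn (fun i => v (y i)) (Iio lam)) (hy_top : ∀ i < lam, v (y i) ≠ ⊤) :
    EvIncreasing v lam y g := by
  classical
  set τ : ℕ → Ordinal → WithTop Γ := fun k i => v (g.coeff k) + k • v (y i)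
  have hsupp : g.support.Nonempty := support_nonempty.mpr hg
  have hcoeff_top : ∀ k ∈ g.support, v (g.coeff k) ≠ ⊤ := fun k hk =>
    v.ne_top_iff.mpr (mem_support_iff.mp hk)
  have hterm : ∀ k i, v (g.coeff k * y i ^ k) = τ k i := fun k i => by
    simp only [τ, v.map_mul, v.map_pow]
  have hterm_top : ∀ k ∈ g.support, ∀ i < lam, v (g.coeff k * y i ^ k) ≠ ⊤ :=
    fun k hk i hi => v.ne_top_iff.mpr
      (mul_ne_zero (mem_support_iff.mp hk) (pow_ne_zero _ (v.ne_top_iff.mp (hy_top i hi))))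
  have hτ_mono : ∀ k ∈ g.support, StrictMonoOn (τ k) (Iio lam) := fun k hk i hi j hj hij =>
    WithTop.add_nsmul_lt_add_nsmul (hcoeff_top k hk) (hy_top j hj)
      (fun hk0 => mem_support_iff.mp hk (hk0 ▸ hg0)) (hy hi hj hij)
  have hτ_inj : ∀ᶠ i in tailsBelow lam, InjOn (τ · i) g.support := by
    have hpair : ∀ q ∈ g.support.offDiag, ∀ᶠ i in tailsBelow lam, ¬ τ q.1 i = τ q.2 i := by
      intro q hq
      obtain ⟨hk, hl, hkl⟩ := Finset.mem_offDiag.mp hq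
      refine eventually_not_tailsBelow_of_subsingleton hlam fun i ⟨hi, hi'⟩ j ⟨hj, hj'⟩ =>
        hy.injOn hi hj (WithTop.eq_of_add_nsmul_eq_add_nsmul (hcoeff_top _ hk) (hcoeff_top _ hl)
          (hy_top i hi) (hy_top j hj) hkl hi' hj')
    filter_upwards [(eventually_all_finset _).mpr hpair] with i hi k hk l hl hkl
    by_contra hne
    exact hi (k, l) (Finset.mem_offDiag.mpr ⟨hk, hl, hne⟩) hkl
  refine exists_forall_lt_of_eventuallyEq hlam (Finset.strictMonoOn_inf' hsupp hτ_mono) ?_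
  filter_upwards [hτ_inj, eventually_lt_tailsBelow hlam] with i hinj hi
  rw [eval_eq_sum, sum_def, v.map_sum_eq_inf' hsupp (by simpa only [hterm] using hinj)
    (fun k hk => hterm_top k hk i hi)]
  simp only [hterm]

theorem lemma_kap_one_general {Γ : Type*} [AddCommGroup Γ] [LinearOrder Γ] [IsOrderedAddMonoid Γ]
    {K' : Type*} [Field K'] (val : K' → WithTop Γ) (hval : IsAddValuation val)
    (lam : Ordinal) (hlam : Order.IsSuccLimit lam)
    (v : Ordinal → K')
    (x : K') (hlim : IsPseudoLimit val lam v x)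
    (h : Polynomial K') (hmonic : h.Monic) (hroot : h.eval x = 0) :
    ∃ ν : Ordinal, ν < lam ∧ ∀ i j : Ordinal, ν < i → i < j → j < lam →
      val (h.eval (v i)) < val (h.eval (v j)) := by
  obtain ⟨w, rfl⟩ := hval.exists_addValuation_eq
  have hmono : StrictMonoOn (fun i => w (v i - x)) (Iio lam) := fun i _ j hj hij => by
    simpa only [w.map_sub_swap] using hlim i j hij hj
  have htop : ∀ i < lam, w (v i - x) ≠ ⊤ := fun i hi =>
    (hmono hi (hlam.succ_lt hi) (Order.lt_succ i)).ne_top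
  have hshift := w.evIncreasing_of_coeff_zero hlam.pos ((taylor_eq_zero x h).not.mpr hmonic.ne_zero)
    (by rw [taylor_coeff_zero, hroot]) hmono htop
  simpa only [EvIncreasing, taylor_eval_sub] using hshift

/-- **Lemma 1.2 (kap), part (1).**
Let `V ⊆ V'` be an immediate extension of valuation rings, `(v i)_{i<λ}` an
algebraic pseudo convergent sequence in `K` with a pseudo limit `x ∈ V'`
algebraic over `K` but no pseudo limit in `K`.  If the minimal polynomial
`h = Irr(x, K)` lies in `V[X]` (it is the monic polynomial with coefficients in
`K` of minimal degree vanishing at `x`), then `val (h (v i)) < val (h (v j))`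
for all sufficiently large `i < j < λ`. -/
theorem lemma_kap_one {Γ : Type*} [AddCommGroup Γ] [LinearOrder Γ] [IsOrderedAddMonoid Γ]
    {K' : Type*} [Field K'] (val : K' → WithTop Γ) (hval : IsAddValuation val)
    (Ksub : Subfield K') (himm : IsImmediate val Ksub)
    (lam : Ordinal) (hlam : Order.IsSuccLimit lam)
    (v : Ordinal → K') (hv : ∀ i : Ordinal, i < lam → v i ∈ Ksub)
    (hpc : PseudoConvergent val lam v)
    (x : K') (hx : 0 ≤ val x) (hlim : IsPseudoLimit val lam v x)
    (halg : ∃ f : Polynomial K', CoeffsIn val Ksub f ∧ EvIncreasing val lam v f)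
    (hnolim : ¬ ∃ y : K', y ∈ Ksub ∧ IsPseudoLimit val lam v y)
    (h : Polynomial K') (hmonic : h.Monic) (hroot : h.eval x = 0)
    (hcoeff : CoeffsIn val Ksub h)
    (hmin : ∀ q : Polynomial K', (∀ n : ℕ, q.coeff n ∈ Ksub) → q.Monic →
      q.eval x = 0 → h.natDegree ≤ q.natDegree) :
    ∃ ν : Ordinal, ν < lam ∧ ∀ i j : Ordinal, ν < i → i < j → j < lam →
      val (h.eval (v i)) < val (h.eval (v j)) :=
  lemma_kap_one_general val hval lam hlam v x hlim h hmonic hroot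
end

section
/- Let V' be a valuation ring extending a valuation ring V, with maximal ideal m', and let (v_i)_{i<λ} be a pseudo convergent sequence in V with pseudo limit x ∈ V' but no pseudo limit in the fraction field K of V. For i < λ set x_i = (x − v_i)/(v_{i+1} − v_i) ∈ V'. Then for any indices i < i' < λ there exist a unit α ∈ V and a non-unit β ∈ V such that x_i = α + β·x_{i'}. Consequently the localizations V[x_i]_{m' ∩ V[x_i]} form a filtered increasing family of subrings of V' with respect to i. -/
open Polynomial

/-! Write `d_i = v (i+1) - v i`. Pseudo-convergence gives `val (v i' - v i) = val d_i < val d_i'`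
for `i < i'`, and in the field `x_i = (v i' - v i)/d_i + (d_i'/d_i) * x_i'`, so `α = (v i' - v i)/d_i`
is a unit and `β = d_i'/d_i` a non-unit of `V`. Hence `V[x_i] ⊆ V[x_i']`, and the localizations at
the centre of `val` are nested. -/

section Valuation

variable {Γ : Type*} [AddCommGroup Γ] [LinearOrder Γ] [IsOrderedAddMonoid Γ] {K : Type*} [Field K]
  {val : K → WithTop Γ}

theorem IsAddValuation.val_one (h : IsAddValuation val) : val 1 = 0 := by
  have h1 : val 1 + val 1 = 0 + val 1 := by rw [← h.2.2.1, mul_one, zero_add]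
  exact WithTop.add_right_cancel (h.2.1 1 one_ne_zero) h1

def IsAddValuation.toAddValuation (h : IsAddValuation val) : AddValuation K (WithTop Γ) :=
  AddValuation.of val h.1 h.val_one h.2.2.2 h.2.2.1

theorem IsAddValuation.val_sub_comm (h : IsAddValuation val) (a b : K) :
    val (a - b) = val (b - a) :=
  h.toAddValuation.map_sub_swap a b

theorem IsAddValuation.val_add_eq_of_lt (h : IsAddValuation val) {a b : K} (hab : val a < val b) :
    val (a + b) = val a :=
  h.toAddValuation.map_add_eq_of_lt_left hab

theorem IsAddValuation.val_div (h : IsAddValuation val) (a b : K) :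
    val (a / b) = val a - val b :=
  h.toAddValuation.map_div

end Valuation

theorem sub_div_eq_div_add_div_mul_sub_div {F : Type*} [Field F] (x a b d : F) {d' : F}
    (hd' : d' ≠ 0) : (x - a) / d = (b - a) / d + d' / d * ((x - b) / d') := by
  field_simp
  ring

theorem Subring.closure_union_singleton_le_of_eq_add_mul {R : Type*} [Ring R] {S : Set R}
    {y y' α β : R} (hα : α ∈ S) (hβ : β ∈ S) (hy : y = α + β * y') :
    Subring.closure (S ∪ {y}) ≤ Subring.closure (S ∪ {y'}) := by
  rw [Subring.closure_le]
  rintro w (hw | rfl)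
  · exact Subring.subset_closure (Or.inl hw)
  · rw [hy]
    exact add_mem (Subring.subset_closure (Or.inl hα))
      (mul_mem (Subring.subset_closure (Or.inl hβ)) (Subring.subset_closure (Or.inr rfl)))

namespace PseudoConvergent

variable {Γ : Type*} [AddCommGroup Γ] [LinearOrder Γ] [IsOrderedAddMonoid Γ] {K : Type*} [Field K]
  {val : K → WithTop Γ} {lam : Ordinal} {v : Ordinal → K} {i i' : Ordinal}

theorem val_sub_eq_val_succ_sub (hval : IsAddValuation val) (hpc : PseudoConvergent val lam v)
    (hii' : i < i') (hi' : i' < lam) : val (v i' - v i) = val (v (i + 1) - v i) := by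
  rcases (Order.add_one_le_of_lt hii').eq_or_lt with h | h
  · rw [h]
  · have hlt : val (v i' - v i) < val (v (i + 1) - v i') := by
      rw [hval.val_sub_comm]
      exact hpc i (i + 1) i' (Order.lt_add_one_iff.2 le_rfl) h hi'
    rw [← sub_add_sub_cancel (v (i + 1)) (v i') (v i), add_comm, hval.val_add_eq_of_lt hlt]

theorem val_succ_sub_lt (hval : IsAddValuation val) (hpc : PseudoConvergent val lam v)
    (hlam : Order.IsSuccLimit lam) (hii' : i < i') (hi' : i' < lam) :
    val (v (i + 1) - v i) < val (v (i' + 1) - v i') := by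
  have hi'1 : i' + 1 < lam := hlam.add_one_lt hi'
  have h := hpc i i' (i' + 1) hii' (Order.lt_add_one_iff.2 le_rfl) hi'1
  rwa [hval.val_sub_comm, hval.val_sub_comm (v i'),
    val_sub_eq_val_succ_sub hval hpc (hii'.trans (Order.lt_add_one_iff.2 le_rfl)) hi'1] at h

theorem succ_sub_ne_zero (hval : IsAddValuation val) (hpc : PseudoConvergent val lam v)
    (hlam : Order.IsSuccLimit lam) (hi : i < lam) : v (i + 1) - v i ≠ 0 := by
  intro h0
  have h := val_succ_sub_lt hval hpc hlam (Order.lt_add_one_iff.2 le_rfl) (hlam.add_one_lt hi)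
  rw [h0, hval.1] at h
  exact not_top_lt h

theorem val_sub_div_succ_sub_eq_zero (hval : IsAddValuation val) (hpc : PseudoConvergent val lam v)
    (hlam : Order.IsSuccLimit lam) (hii' : i < i') (hi' : i' < lam) :
    val ((v i' - v i) / (v (i + 1) - v i)) = 0 := by
  rw [hval.val_div, val_sub_eq_val_succ_sub hval hpc hii' hi',
    LinearOrderedAddCommGroupWithTop.sub_self_eq_zero_of_ne_top
      (hval.2.1 _ (succ_sub_ne_zero hval hpc hlam (hii'.trans hi')))]

theorem val_succ_sub_div_succ_sub_pos (hval : IsAddValuation val)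
    (hpc : PseudoConvergent val lam v) (hlam : Order.IsSuccLimit lam) (hii' : i < i')
    (hi' : i' < lam) : 0 < val ((v (i' + 1) - v i') / (v (i + 1) - v i)) := by
  rw [hval.val_div, LinearOrderedAddCommGroupWithTop.sub_pos]
  exact Or.inl (val_succ_sub_lt hval hpc hlam hii' hi')

end PseudoConvergent

theorem localizations_filtered_general {Γ : Type*} [AddCommGroup Γ] [LinearOrder Γ] [IsOrderedAddMonoid Γ]
    {K' : Type*} [Field K'] (val : K' → WithTop Γ) (hval : IsAddValuation val)
    (Ksub : Subfield K')
    (lam : Ordinal) (hlam : Order.IsSuccLimit lam)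
    (v : Ordinal → K') (hv : ∀ i : Ordinal, i < lam → v i ∈ Ksub ∧ 0 ≤ val (v i))
    (hpc : PseudoConvergent val lam v)
    (x : K') :
    ∀ i i' : Ordinal, i < i' → i' < lam →
      (∃ α β : K', α ∈ Ksub ∧ val α = 0 ∧ β ∈ Ksub ∧ 0 < val β ∧
        (x - v i) / (v (i + 1) - v i) = α + β * ((x - v i') / (v (i' + 1) - v i'))) ∧
      ∀ z : K',
        (∃ p q : K',
          p ∈ Subring.closure
            ({w : K' | w ∈ Ksub ∧ 0 ≤ val w} ∪ {(x - v i) / (v (i + 1) - v i)}) ∧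
          q ∈ Subring.closure
            ({w : K' | w ∈ Ksub ∧ 0 ≤ val w} ∪ {(x - v i) / (v (i + 1) - v i)}) ∧
          val q = 0 ∧ z = p / q) →
        ∃ p q : K',
          p ∈ Subring.closure
            ({w : K' | w ∈ Ksub ∧ 0 ≤ val w} ∪ {(x - v i') / (v (i' + 1) - v i')}) ∧
          q ∈ Subring.closure
            ({w : K' | w ∈ Ksub ∧ 0 ≤ val w} ∪ {(x - v i') / (v (i' + 1) - v i')}) ∧
          val q = 0 ∧ z = p / q := by
  intro i i' hii' hi'
  have hi : i < lam := hii'.trans hi'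
  have hmem : ∀ j, j < lam → v j ∈ Ksub := fun j hj => (hv j hj).1
  have hα := PseudoConvergent.val_sub_div_succ_sub_eq_zero hval hpc hlam hii' hi'
  have hβ := PseudoConvergent.val_succ_sub_div_succ_sub_pos hval hpc hlam hii' hi'
  have hαmem : (v i' - v i) / (v (i + 1) - v i) ∈ Ksub :=
    div_mem (sub_mem (hmem i' hi') (hmem i hi)) (sub_mem (hmem _ (hlam.add_one_lt hi)) (hmem i hi))
  have hβmem : (v (i' + 1) - v i') / (v (i + 1) - v i) ∈ Ksub :=
    div_mem (sub_mem (hmem _ (hlam.add_one_lt hi')) (hmem i' hi'))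
      (sub_mem (hmem _ (hlam.add_one_lt hi)) (hmem i hi))
  have hx_i := sub_div_eq_div_add_div_mul_sub_div x (v i) (v i') (v (i + 1) - v i)
    (PseudoConvergent.succ_sub_ne_zero hval hpc hlam hi')
  have hle := Subring.closure_union_singleton_le_of_eq_add_mul
    (S := {w : K' | w ∈ Ksub ∧ 0 ≤ val w}) ⟨hαmem, hα.ge⟩ ⟨hβmem, hβ.le⟩ hx_i
  refine ⟨⟨_, _, hαmem, hα, hβmem, hβ, hx_i⟩, ?_⟩
  rintro z ⟨p, q, hp, hq, hq0, rfl⟩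
  exact ⟨p, q, hle hp, hle hq, hq0, rfl⟩

/-- **The rings `V[x_i]` localized at `m' ∩ V[x_i]` form a filtered increasing
family.**  With `x_i = (x - v i)/(v (i+1) - v i)`, for `i < i' < λ` there are a
unit `α ∈ V` and a non-unit `β ∈ V` with `x_i = α + β * x_i'`; consequently the
localization of `V[x_i]` at `m' ∩ V[x_i]` (the set of fractions `p/q` with
`p, q ∈ V[x_i]`, `val q = 0`) is contained in that of `V[x_i']`. -/
theorem localizations_filtered {Γ : Type*} [AddCommGroup Γ] [LinearOrder Γ] [IsOrderedAddMonoid Γ]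
    {K' : Type*} [Field K'] (val : K' → WithTop Γ) (hval : IsAddValuation val)
    (Ksub : Subfield K')
    (lam : Ordinal) (hlam : Order.IsSuccLimit lam)
    (v : Ordinal → K') (hv : ∀ i : Ordinal, i < lam → v i ∈ Ksub ∧ 0 ≤ val (v i))
    (hpc : PseudoConvergent val lam v)
    (x : K') (hx : 0 ≤ val x) (hlim : IsPseudoLimit val lam v x)
    (hnolim : ¬ ∃ y : K', y ∈ Ksub ∧ IsPseudoLimit val lam v y) :
    ∀ i i' : Ordinal, i < i' → i' < lam →
      (∃ α β : K', α ∈ Ksub ∧ val α = 0 ∧ β ∈ Ksub ∧ 0 < val β ∧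
        (x - v i) / (v (i + 1) - v i) = α + β * ((x - v i') / (v (i' + 1) - v i'))) ∧
      ∀ z : K',
        (∃ p q : K',
          p ∈ Subring.closure
            ({w : K' | w ∈ Ksub ∧ 0 ≤ val w} ∪ {(x - v i) / (v (i + 1) - v i)}) ∧
          q ∈ Subring.closure
            ({w : K' | w ∈ Ksub ∧ 0 ≤ val w} ∪ {(x - v i) / (v (i + 1) - v i)}) ∧
          val q = 0 ∧ z = p / q) →
        ∃ p q : K',
          p ∈ Subring.closure
            ({w : K' | w ∈ Ksub ∧ 0 ≤ val w} ∪ {(x - v i') / (v (i' + 1) - v i')}) ∧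
          q ∈ Subring.closure
            ({w : K' | w ∈ Ksub ∧ 0 ≤ val w} ∪ {(x - v i') / (v (i' + 1) - v i')}) ∧
          val q = 0 ∧ z = p / q :=
  localizations_filtered_general val hval Ksub lam hlam v hv hpc x
end

section
/- Let V ⊆ V' be an immediate extension of valuation rings with fraction fields K ⊆ K', let (v_i)_{i<λ} be an algebraic pseudo convergent sequence in V with pseudo limit x ∈ V' but no pseudo limit in K, and let g ∈ V[Y] have degree strictly less than the minimal degree s of polynomials f ∈ V[Y] with val(f(v_i)) eventually strictly increasing. Then val(g(x)) = val(g(v_i)) for all sufficiently large i < λ; in particular val(g(x)) lies in the value group of V and is eventually constant along the sequence. -/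
open Polynomial

/-! Taylor-expand `g` at the pseudo limit `x`:
`g(v i) - g(x) = ∑_{k ≥ 1} (hasseDeriv k g)(x) * (v i - x)^k`.
The values of the nonzero terms, `val((hasseDeriv k g)(x)) + k • val(x - v i)`, are affine
in the strictly increasing `val(x - v i)` with distinct slopes, so eventually a single term has
strictly the least value and `val(g(v i) - g(x)) = δ i` with `δ` strictly increasing. Either `val(g(x)) < δ i` from some `i` on, and then `val(g(v i)) = val(g(x))`,
or `val(g(v i)) = δ i` is eventually strictly increasing, which minimality of `s` rules out. -/

open Filter

theorem add_nsmul_lt_add_nsmul_of_le {Γ : Type*} [AddCommGroup Γ] [LinearOrder Γ]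
    [IsOrderedAddMonoid Γ] {a b γ γ' : Γ} {m n : ℕ} (hmn : m < n) (hγ : γ < γ')
    (h : a + m • γ ≤ b + n • γ) : a + m • γ' < b + n • γ' :=
  calc a + m • γ' = a + m • γ + m • (γ' - γ) := by rw [nsmul_sub]; abel
    _ ≤ b + n • γ + m • (γ' - γ) := by gcongr
    _ < b + n • γ + n • (γ' - γ) := by gcongr
    _ = b + n • γ' := by rw [nsmul_sub]; abel

theorem Finset.exists_eventually_forall_lt {ι α β : Type*} [Preorder β] {l : Filter α}
    {f : ι → α → β} {s : Finset ι} (hs : s.Nonempty)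
    (h : ∀ j ∈ s, ∀ k ∈ s, j ≠ k → (∀ᶠ a in l, f j a < f k a) ∨ ∀ᶠ a in l, f k a < f j a) :
    ∃ j ∈ s, ∀ᶠ a in l, ∀ k ∈ s, k ≠ j → f j a < f k a := by
  induction hs using Finset.Nonempty.cons_induction with
  | singleton j =>
    exact ⟨j, mem_singleton_self j, .of_forall fun _ k hk hkj => absurd (mem_singleton.1 hk) hkj⟩
  | cons i s hi hs ih =>
    obtain ⟨j, hj, hmin⟩ :=
      ih fun j hj k hk => h j (mem_cons_of_mem hj) k (mem_cons_of_mem hk)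
    have hij : i ≠ j := fun hij => hi (hij ▸ hj)
    rcases h i (mem_cons_self i s) j (mem_cons_of_mem hj) hij with hlt | hgt
    · refine ⟨i, mem_cons_self i s, ?_⟩
      filter_upwards [hlt, hmin] with a hlt hmin k hk hki
      obtain rfl | hks := mem_cons.1 hk
      · exact absurd rfl hki
      obtain rfl | hkj := eq_or_ne k j
      · exact hlt
      · exact hlt.trans (hmin k hks hkj)
    · refine ⟨j, mem_cons_of_mem hj, ?_⟩
      filter_upwards [hgt, hmin] with a hgt hmin k hk hkj
      obtain rfl | hks := mem_cons.1 hk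
      · exact hgt
      · exact hmin k hks hkj

section WithTop

variable {ι : Type*} [Preorder ι] [NoMaxOrder ι]

theorem StrictMono.ne_top {β : Type*} [PartialOrder β] [OrderTop β] {f : ι → β}
    (hf : StrictMono f) (i : ι) : f i ≠ ⊤ :=
  let ⟨_, hj⟩ := exists_gt i
  (hf hj).ne_top

variable {Γ : Type*} [AddCommGroup Γ] [LinearOrder Γ] [IsOrderedAddMonoid Γ] {γ : ι → WithTop Γ}

theorem StrictMono.const_add_nsmul (hγ : StrictMono γ) {a : WithTop Γ} (ha : a ≠ ⊤) {n : ℕ}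
    (hn : n ≠ 0) : StrictMono fun i => a + n • γ i := by
  intro i j hij
  lift a to Γ using ha
  lift γ i to Γ using hγ.ne_top i with c hc
  lift γ j to Γ using hγ.ne_top j with d hd
  have hcd : c < d := by rw [← WithTop.coe_lt_coe, hc, hd]; exact hγ hij
  exact_mod_cast (show a + n • c < a + n • d by gcongr)

theorem StrictMono.eventually_add_nsmul_lt_or (hγ : StrictMono γ) {a b : WithTop Γ}
    (ha : a ≠ ⊤) (hb : b ≠ ⊤) {m n : ℕ} (hmn : m < n) :
    (∀ᶠ i in atTop, a + m • γ i < b + n • γ i) ∨ ∀ᶠ i in atTop, b + n • γ i < a + m • γ i := by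
  by_cases hle : ∃ i₀, a + m • γ i₀ ≤ b + n • γ i₀
  · obtain ⟨i₀, hle⟩ := hle
    refine .inl ?_
    filter_upwards [eventually_gt_atTop i₀] with i hi
    lift a to Γ using ha
    lift b to Γ using hb
    lift γ i₀ to Γ using hγ.ne_top i₀ with c hc
    lift γ i to Γ using hγ.ne_top i with d hd
    have hcd : c < d := by rw [← WithTop.coe_lt_coe, hc, hd]; exact hγ hi
    exact_mod_cast add_nsmul_lt_add_nsmul_of_le hmn hcd (by exact_mod_cast hle)
  · simp only [not_exists, not_le] at hle
    exact .inr (.of_forall hle)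

end WithTop

theorem Polynomial.eval_sub_eval_eq_sum_hasseDeriv {R : Type*} [CommRing R] (f : R[X]) (x y : R) :
    f.eval y - f.eval x =
      ∑ k ∈ Finset.Ico 1 (f.natDegree + 1), (hasseDeriv k f).eval x * (y - x) ^ k := by
  have h := eval_eq_sum_range (p := taylor x f) (y - x)
  rw [taylor_eval, sub_add_cancel, natDegree_taylor,
    Finset.sum_range_eq_add_Ico _ f.natDegree.succ_pos] at h
  simp only [taylor_coeff, hasseDeriv_zero, LinearMap.id_apply, pow_zero, mul_one] at h
  rw [h, add_sub_cancel_left]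

section Valuation

variable {Γ : Type*} [AddCommGroup Γ] [LinearOrder Γ] [IsOrderedAddMonoid Γ] {K : Type*} [Field K]

theorem IsAddValuation.exists_addValuation {val : K → WithTop Γ} (hval : IsAddValuation val) :
    ∃ w : AddValuation K (WithTop Γ), ⇑w = val := by
  have hone : val 1 = 0 := by
    have h := hval.2.2.1 1 1
    rw [one_mul] at h
    obtain ⟨a, ha⟩ := WithTop.ne_top_iff_exists.1 (hval.2.1 1 one_ne_zero)
    rw [← ha] at h ⊢
    exact_mod_cast left_eq_add.1 (by exact_mod_cast h : a = a + a)
  exact ⟨AddValuation.of val hval.1 hone hval.2.2.2 hval.2.2.1, rfl⟩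

namespace AddValuation

variable (w : AddValuation K (WithTop Γ))

theorem map_sum_eq_of_lt {ι : Type*} [DecidableEq ι] {s : Finset ι} {f : ι → K} {j : ι}
    (hj : j ∈ s) (hfj : w (f j) ≠ ⊤) (hf : ∀ i ∈ s.erase j, w (f j) < w (f i)) :
    w (∑ i ∈ s, f i) = w (f j) := by
  rw [← Finset.add_sum_erase s f hj]
  exact w.map_add_eq_of_lt_left (w.map_lt_sum hfj hf)

variable {ι : Type*} [Preorder ι] [NoMaxOrder ι]

theorem eventually_map_eq_or_eventually_map_eq {y : K} {z : ι → K} {δ : ι → WithTop Γ}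
    (hδ : StrictMono δ) (h : ∀ᶠ i in atTop, w (z i - y) = δ i) :
    (∀ᶠ i in atTop, w (z i) = w y) ∨ ∀ᶠ i in atTop, w (z i) = δ i := by
  by_cases hy : ∃ i₀, w y < δ i₀
  · obtain ⟨i₀, hi₀⟩ := hy
    refine .inl ?_
    filter_upwards [h, eventually_gt_atTop i₀] with i hi hii₀
    exact w.map_eq_of_lt_sub (hi ▸ hi₀.trans (hδ hii₀))
  · simp only [not_exists, not_lt] at hy
    refine .inr ?_
    filter_upwards [h] with i hi
    obtain ⟨j, hij⟩ := exists_gt i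
    rw [← sub_add_cancel (z i) y, w.map_add_eq_of_lt_left (hi ▸ (hδ hij).trans_le (hy j)), hi]

theorem eventually_map_eval_eq_or_strictMono {x : K} {z : ι → K}
    (hz : StrictMono fun i => w (x - z i)) (g : K[X]) :
    (∀ᶠ i in atTop, w (g.eval (z i)) = w (g.eval x)) ∨
      ∃ δ : ι → WithTop Γ, StrictMono δ ∧ ∀ᶠ i in atTop, w (g.eval (z i)) = δ i := by
  classical
  set H : ℕ → K := fun k => (hasseDeriv k g).eval x
  set S := (Finset.Ico 1 (g.natDegree + 1)).filter fun k => H k ≠ 0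
  have htaylor : ∀ i, g.eval (z i) - g.eval x = ∑ k ∈ S, H k * (z i - x) ^ k := fun i => by
    rw [eval_sub_eval_eq_sum_hasseDeriv, Finset.sum_filter_of_ne]
    exact fun _ _ hk => left_ne_zero_of_mul hk
  rcases S.eq_empty_or_nonempty with hS | hS
  · refine .inl (.of_forall fun i => ?_)
    rw [sub_eq_zero.1 (by rw [htaylor, hS, Finset.sum_empty] : g.eval (z i) - g.eval x = 0)]
  have hterm : ∀ k i, w (H k * (z i - x) ^ k) = w (H k) + k • w (x - z i) := fun k i => by
    rw [w.map_mul, w.map_pow, w.map_sub_swap]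
  have hHtop : ∀ k ∈ S, w (H k) ≠ ⊤ := fun k hk => w.ne_top_iff.2 (Finset.mem_filter.1 hk).2
  have hcomparable : ∀ j ∈ S, ∀ l ∈ S, j ≠ l →
      (∀ᶠ i in atTop, w (H j) + j • w (x - z i) < w (H l) + l • w (x - z i)) ∨
        ∀ᶠ i in atTop, w (H l) + l • w (x - z i) < w (H j) + j • w (x - z i) := by
    intro j hj l hl hjl
    rcases hjl.lt_or_gt with hjl | hlj
    · exact hz.eventually_add_nsmul_lt_or (hHtop j hj) (hHtop l hl) hjl
    · exact (hz.eventually_add_nsmul_lt_or (hHtop l hl) (hHtop j hj) hlj).symm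
  obtain ⟨k, hk, hmin⟩ := Finset.exists_eventually_forall_lt hS hcomparable
  have hk0 : k ≠ 0 := Nat.one_le_iff_ne_zero.1 (Finset.mem_Ico.1 (Finset.mem_filter.1 hk).1).1
  have hδ := hz.const_add_nsmul (hHtop k hk) hk0
  refine (w.eventually_map_eq_or_eventually_map_eq hδ ?_).imp_right fun h => ⟨_, hδ, h⟩
  filter_upwards [hmin] with i hi
  rw [htaylor, w.map_sum_eq_of_lt hk (hterm k i ▸ hδ.ne_top i) fun l hl => ?_, hterm]
  simpa only [hterm] using hi l (Finset.mem_of_mem_erase hl) (Finset.ne_of_mem_erase hl)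

end AddValuation

end Valuation

theorem exists_lt_forall_of_eventually_atTop_Iio {α : Type*} [LinearOrder α] {b : α}
    [Nonempty (Set.Iio b)] {p : α → Prop} (h : ∀ᶠ i : Set.Iio b in atTop, p i) :
    ∃ a < b, ∀ i, a < i → i < b → p i :=
  let ⟨a, ha⟩ := eventually_atTop.1 h
  ⟨a, a.2, fun i hai hib => ha ⟨i, hib⟩ hai.le⟩

theorem EvIncreasing.of_eventually_eq_strictMono {Γ : Type*} [AddCommGroup Γ] [LinearOrder Γ]
    [IsOrderedAddMonoid Γ] {K : Type*} [Field K] {val : K → WithTop Γ} {lam : Ordinal}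
    [Nonempty (Set.Iio lam)] {v : Ordinal → K} {f : Polynomial K} {δ : Set.Iio lam → WithTop Γ}
    (hδ : StrictMono δ) (h : ∀ᶠ i : Set.Iio lam in atTop, val (f.eval (v i)) = δ i) :
    EvIncreasing val lam v f :=
  let ⟨a, ha⟩ := eventually_atTop.1 h
  ⟨a, a.2, fun i i' hai hii' hi' => by
    rw [ha ⟨i, hii'.trans hi'⟩ hai.le, ha ⟨i', hi'⟩ (hai.trans hii').le]
    exact hδ (Subtype.mk_lt_mk.2 hii')⟩

theorem val_g_eventually_eq_general {Γ : Type*} [AddCommGroup Γ] [LinearOrder Γ] [IsOrderedAddMonoid Γ]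
    {K' : Type*} [Field K'] (val : K' → WithTop Γ) (hval : IsAddValuation val)
    (Ksub : Subfield K')
    (lam : Ordinal) (hlam : Order.IsSuccLimit lam)
    (v : Ordinal → K')
    (x : K') (hlim : IsPseudoLimit val lam v x)
    (s : ℕ)
    (hs : IsLeast {n : ℕ | ∃ f : Polynomial K',
      CoeffsIn val Ksub f ∧ f.natDegree = n ∧ EvIncreasing val lam v f} s)
    (g : Polynomial K') (hg : CoeffsIn val Ksub g) (hdeg : g.natDegree < s) :
    ∃ ν : Ordinal, ν < lam ∧ ∀ i : Ordinal, ν < i → i < lam →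
      val (g.eval x) = val (g.eval (v i)) := by
  obtain ⟨w, rfl⟩ := hval.exists_addValuation
  have := hlam.isSuccPrelimit.noMaxOrder_Iio
  have : Nonempty (Set.Iio lam) := ⟨⟨0, hlam.pos⟩⟩
  have hz : StrictMono fun i : Set.Iio lam => w (x - v i) := fun i j hij => hlim i j hij j.2
  rcases w.eventually_map_eval_eq_or_strictMono hz g with h | ⟨δ, hδ, h⟩
  · exact exists_lt_forall_of_eventually_atTop_Iio (h.mono fun _ => Eq.symm)
  · exact absurd (hs.2 ⟨g, hg, rfl, .of_eventually_eq_strictMono hδ h⟩) hdeg.not_ge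

/-- **Value computation part of Lemma 1.1.**
Let `V ⊆ V'` be an immediate extension of valuation rings, `(v i)_{i<λ}` an
algebraic pseudo convergent sequence in `V` with pseudo limit `x ∈ V'` but no
pseudo limit in `K`, and let `g ∈ V[Y]` have degree strictly less than the
minimal degree `s` of polynomials with eventually strictly increasing values
along `v`.  Then `val (g x) = val (g (v i))` for all sufficiently large `i < λ`;
in particular `val (g x)` is eventually constant along the sequence. -/
theorem val_g_eventually_eq {Γ : Type*} [AddCommGroup Γ] [LinearOrder Γ] [IsOrderedAddMonoid Γ]
    {K' : Type*} [Field K'] (val : K' → WithTop Γ) (hval : IsAddValuation val)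
    (Ksub : Subfield K') (himm : IsImmediate val Ksub)
    (lam : Ordinal) (hlam : Order.IsSuccLimit lam)
    (v : Ordinal → K') (hv : ∀ i : Ordinal, i < lam → v i ∈ Ksub ∧ 0 ≤ val (v i))
    (hpc : PseudoConvergent val lam v)
    (x : K') (hx : 0 ≤ val x) (hlim : IsPseudoLimit val lam v x)
    (hnolim : ¬ ∃ y : K', y ∈ Ksub ∧ IsPseudoLimit val lam v y)
    (s : ℕ)
    (hs : IsLeast {n : ℕ | ∃ f : Polynomial K',
      CoeffsIn val Ksub f ∧ f.natDegree = n ∧ EvIncreasing val lam v f} s)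
    (g : Polynomial K') (hg : CoeffsIn val Ksub g) (hdeg : g.natDegree < s) :
    ∃ ν : Ordinal, ν < lam ∧ ∀ i : Ordinal, ν < i → i < lam →
      val (g.eval x) = val (g.eval (v i)) :=
  val_g_eventually_eq_general val hval Ksub lam hlam v x hlim s hs g hg hdeg
end

section
/- Let V be a valuation ring with fraction field K and let h ∈ V[X] be a polynomial with deg h ≥ 1. Then for every f ∈ V[X] there exist c ∈ V \ {0}, n ∈ ℕ, and a polynomial F ∈ V[X₀, X₁, …, X_n] with deg_{X_i} F < deg h for 0 ≤ i < n, such that c·f(X) = F(X, h(X), h(h(X)), …, h^{∘n}(X)), where h^{∘n} denotes the n-fold composition of h with itself. -/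
open Polynomial

section Aux

variable {V : Type*} [CommRing V] [IsDomain V]

/-- `f` admits a base-`h` expansion with digits of degree `< deg h`, after scaling
by a nonzero constant. -/
private def HRep (h f : Polynomial V) : Prop :=
  ∃ c : V, c ≠ 0 ∧ ∃ m : ℕ, ∃ r : ℕ → Polynomial V,
    (∀ k, (r k).natDegree < h.natDegree) ∧
    c • f = ∑ k ∈ Finset.range m, r k * h ^ k

private lemma sum_extend {M m : ℕ} (hm : m ≤ M) (g : ℕ → Polynomial V) :
    ∑ k ∈ Finset.range m, g k = ∑ k ∈ Finset.range M, (if k < m then g k else 0) := by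
  rw [Finset.sum_congr rfl (fun k hk => (if_pos (Finset.mem_range.mp hk)).symm)]
  exact Finset.sum_subset (Finset.range_subset_range.mpr hm) fun k _ hk => if_neg (by simpa using hk)

private lemma hrep_small {h f : Polynomial V} (hdeg : 1 ≤ h.natDegree)
    (hf : f.natDegree < h.natDegree) : HRep h f := by
  refine ⟨1, one_ne_zero, 1, fun k => if k = 0 then f else 0, ?_, ?_⟩
  · intro k
    rcases eq_or_ne k 0 with rfl | hk
    · simpa using hf
    · simp only [if_neg hk, natDegree_zero]
      omega
  · simp

private lemma hrep_add {h f g : Polynomial V} (hf : HRep h f) (hg : HRep h g) :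
    HRep h (f + g) := by
  obtain ⟨c1, hc1, m1, r1, hr1, e1⟩ := hf
  obtain ⟨c2, hc2, m2, r2, hr2, e2⟩ := hg
  refine ⟨c1 * c2, mul_ne_zero hc1 hc2, max m1 m2,
    fun k => (if k < m1 then c2 • r1 k else 0) + (if k < m2 then c1 • r2 k else 0), ?_, ?_⟩
  · intro k
    have hz : (0 : Polynomial V).natDegree < h.natDegree :=
      lt_of_le_of_lt (Nat.zero_le _) (hr1 0)
    have b1 : (if k < m1 then c2 • r1 k else 0).natDegree < h.natDegree := by
      split
      · exact lt_of_le_of_lt (natDegree_smul_le _ _) (hr1 k)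
      · simpa using hz
    have b2 : (if k < m2 then c1 • r2 k else 0).natDegree < h.natDegree := by
      split
      · exact lt_of_le_of_lt (natDegree_smul_le _ _) (hr2 k)
      · simpa using hz
    exact lt_of_le_of_lt (natDegree_add_le _ _) (max_lt b1 b2)
  · have step : (c1 * c2) • (f + g) = c2 • (c1 • f) + c1 • (c2 • g) := by
      rw [smul_add, smul_smul, smul_smul, mul_comm c2 c1]
    rw [step, e1, e2, sum_extend (le_max_left m1 m2) (fun k => r1 k * h ^ k),
      sum_extend (le_max_right m1 m2) (fun k => r2 k * h ^ k),
      Finset.smul_sum, Finset.smul_sum, ← Finset.sum_add_distrib]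
    refine Finset.sum_congr rfl fun k _ => ?_
    rw [add_mul]
    congr 1 <;> split <;> simp [smul_mul_assoc]

private lemma hrep_smul {h f : Polynomial V} (a : V) (hf : HRep h f) : HRep h (a • f) := by
  obtain ⟨c, hc, m, r, hr, e⟩ := hf
  refine ⟨c, hc, m, fun k => a • r k, fun k =>
    lt_of_le_of_lt (natDegree_smul_le _ _) (hr k), ?_⟩
  rw [smul_comm, e, Finset.smul_sum]
  exact Finset.sum_congr rfl fun k _ => (smul_mul_assoc a (r k) (h ^ k)).symm

private lemma hrep_unsmul {h f : Polynomial V} {a : V} (ha : a ≠ 0)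
    (hf : HRep h (a • f)) : HRep h f := by
  obtain ⟨c, hc, m, r, hr, e⟩ := hf
  exact ⟨c * a, mul_ne_zero hc ha, m, r, hr, by rwa [mul_smul]⟩

private lemma hrep_mul_h {h f : Polynomial V} (hf : HRep h f) : HRep h (f * h) := by
  obtain ⟨c, hc, m, r, hr, e⟩ := hf
  refine ⟨c, hc, m + 1, fun k => if k = 0 then 0 else r (k - 1), ?_, ?_⟩
  · intro k
    rcases eq_or_ne k 0 with rfl | hk
    · simpa using lt_of_le_of_lt (Nat.zero_le _) (hr 0)
    · simpa [hk] using hr (k - 1)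
  · have step : c • (f * h) = (c • f) * h := (smul_mul_assoc c f h).symm
    rw [step, e, Finset.sum_mul, Finset.sum_range_succ']
    simp only [Nat.succ_ne_zero, if_false, Nat.add_sub_cancel, if_true, reduceIte,
      zero_mul, add_zero]
    exact Finset.sum_congr rfl fun k _ => by ring

private lemma hrep_all {h : Polynomial V} (hdeg : 1 ≤ h.natDegree) (f : Polynomial V) :
    HRep h f := by
  have hh0 : h ≠ 0 := fun h0 => by simp [h0] at hdeg
  suffices H : ∀ N : ℕ, ∀ f : Polynomial V, f.natDegree < N → HRep h f from
    H (f.natDegree + 1) f (Nat.lt_succ_self _)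
  intro N
  induction N with
  | zero => exact fun f hf => absurd hf (Nat.not_lt_zero _)
  | succ N ih =>
    intro f hf
    by_cases hsmall : f.natDegree < h.natDegree
    · exact hrep_small hdeg hsmall
    push_neg at hsmall
    have hf0 : f ≠ 0 := by
      intro h0
      rw [h0, natDegree_zero] at hsmall
      omega
    set e := f.natDegree - h.natDegree with he
    set g := h.leadingCoeff • f - f.leadingCoeff • (X ^ e * h) with hg
    have hlf : f.leadingCoeff ≠ 0 := leadingCoeff_ne_zero.mpr hf0
    have hlh : h.leadingCoeff ≠ 0 := leadingCoeff_ne_zero.mpr hh0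
    have hq0 : X ^ e * h ≠ 0 := mul_ne_zero (pow_ne_zero _ X_ne_zero) hh0
    have hdq : (X ^ e * h).natDegree = f.natDegree := by
      rw [natDegree_mul (pow_ne_zero _ X_ne_zero) hh0, natDegree_X_pow]
      omega
    have hdegs : (h.leadingCoeff • f).degree = (f.leadingCoeff • (X ^ e * h)).degree := by
      rw [smul_eq_C_mul, smul_eq_C_mul, degree_mul, degree_mul, degree_C hlh, degree_C hlf,
        zero_add, zero_add, degree_eq_natDegree hf0, degree_eq_natDegree hq0, hdq]
    have hlc : (h.leadingCoeff • f).leadingCoeff =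
        (f.leadingCoeff • (X ^ e * h)).leadingCoeff := by
      rw [smul_eq_C_mul, smul_eq_C_mul, leadingCoeff_mul, leadingCoeff_mul, leadingCoeff_C,
        leadingCoeff_C, leadingCoeff_mul, leadingCoeff_X_pow, one_mul, mul_comm]
    have hp0 : h.leadingCoeff • f ≠ 0 := by
      rw [smul_eq_C_mul]
      exact mul_ne_zero (by simpa using hlh) hf0
    have hdg : g.natDegree < f.natDegree := by
      have hdlt : g.degree < (h.leadingCoeff • f).degree := degree_sub_lt hdegs hp0 hlc
      rcases eq_or_ne g 0 with h0 | h0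
      · rw [h0, natDegree_zero]
        omega
      · exact natDegree_lt_natDegree h0 (lt_of_lt_of_le hdlt (degree_smul_le _ _))
    have h1 : HRep h g := ih g (by omega)
    have h2 : HRep h ((X : Polynomial V) ^ e) := by
      refine ih _ ?_
      rw [natDegree_X_pow]
      omega
    have h5 : HRep h (h.leadingCoeff • f) := by
      have step : h.leadingCoeff • f = g + f.leadingCoeff • (X ^ e * h) := by
        rw [hg, sub_add_cancel]
      rw [step]
      exact hrep_add h1 (hrep_smul _ (hrep_mul_h h2))
    exact hrep_unsmul hlh h5

private lemma degreeOf_aeval_X_le {σ : Type*} [DecidableEq σ] (i : σ) (p : Polynomial V) :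
    MvPolynomial.degreeOf i (Polynomial.aeval (MvPolynomial.X i : MvPolynomial σ V) p) ≤
      p.natDegree := by
  rw [Polynomial.aeval_eq_sum_range (MvPolynomial.X i : MvPolynomial σ V)]
  refine le_trans (MvPolynomial.degreeOf_sum_le _ _ _) ?_
  refine Finset.sup_le fun j hj => ?_
  have hj' : j ≤ p.natDegree := by
    have := Finset.mem_range.mp hj
    omega
  calc MvPolynomial.degreeOf i (p.coeff j • (MvPolynomial.X i : MvPolynomial σ V) ^ j)
      = MvPolynomial.degreeOf i (MvPolynomial.C (p.coeff j) *
          (MvPolynomial.X i : MvPolynomial σ V) ^ j) := by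
        rw [MvPolynomial.smul_eq_C_mul]
    _ ≤ MvPolynomial.degreeOf i (MvPolynomial.C (p.coeff j) : MvPolynomial σ V) +
          MvPolynomial.degreeOf i ((MvPolynomial.X i : MvPolynomial σ V) ^ j) :=
        MvPolynomial.degreeOf_mul_le _ _ _
    _ ≤ 0 + j * MvPolynomial.degreeOf i (MvPolynomial.X i : MvPolynomial σ V) := by
        rw [MvPolynomial.degreeOf_C]
        exact add_le_add le_rfl (MvPolynomial.degreeOf_pow_le _ _ _)
    _ ≤ p.natDegree := by
        rw [MvPolynomial.degreeOf_X, if_pos rfl]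
        omega

end Aux

/-- **Iterated pseudo-division (claim in the proof of Theorem 1.8).**
Let `V` be a valuation ring with fraction field `K` and `h ∈ V[X]` with
`deg h ≥ 1`.  Then for every `f ∈ V[X]` there are `c ∈ V \ {0}`, `n : ℕ` and a
polynomial `F ∈ V[X₀,…,X_n]` with `deg_{X_i} F < deg h` for `0 ≤ i < n` such
that `c • f = F (X, h (X), h (h (X)), …, h^{∘n} (X))`. -/
theorem iterated_division {V : Type*} [CommRing V] [IsDomain V] [ValuationRing V]
    (h : Polynomial V) (hdeg : 1 ≤ h.natDegree) (f : Polynomial V) :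
    ∃ c : V, c ≠ 0 ∧ ∃ n : ℕ, ∃ F : MvPolynomial (Fin (n + 1)) V,
      (∀ i : Fin (n + 1), (i : ℕ) < n → F.degreeOf i < h.natDegree) ∧
      c • f = MvPolynomial.aeval
        (fun i : Fin (n + 1) => (fun p : Polynomial V => p.comp h)^[(i : ℕ)] Polynomial.X)
        F := by
  obtain ⟨c, hc, m, r, hr, e⟩ := hrep_all hdeg f
  refine ⟨c, hc, 1, ∑ k ∈ Finset.range m,
    Polynomial.aeval (MvPolynomial.X (0 : Fin 2) : MvPolynomial (Fin 2) V) (r k) * (MvPolynomial.X (1 : Fin 2) : MvPolynomial (Fin 2) V) ^ k,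
    ?_, ?_⟩
  · intro i hi
    have hi0 : i = 0 := by
      ext
      simp only [Fin.val_zero]
      omega
    subst hi0
    have hb : ∀ k, MvPolynomial.degreeOf (0 : Fin 2)
        (Polynomial.aeval (MvPolynomial.X (0 : Fin 2) : MvPolynomial (Fin 2) V) (r k) *
          (MvPolynomial.X (1 : Fin 2) : MvPolynomial (Fin 2) V) ^ k) ≤ h.natDegree - 1 := by
      intro k
      calc MvPolynomial.degreeOf (0 : Fin 2)
            (Polynomial.aeval (MvPolynomial.X (0 : Fin 2) : MvPolynomial (Fin 2) V) (r k) *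
              (MvPolynomial.X (1 : Fin 2) : MvPolynomial (Fin 2) V) ^ k)
          ≤ MvPolynomial.degreeOf 0 (Polynomial.aeval (MvPolynomial.X (0 : Fin 2) : MvPolynomial (Fin 2) V) (r k)) +
              MvPolynomial.degreeOf (0 : Fin 2) ((MvPolynomial.X (1 : Fin 2) : MvPolynomial (Fin 2) V) ^ k) :=
            MvPolynomial.degreeOf_mul_le _ _ _
        _ ≤ (r k).natDegree + k * MvPolynomial.degreeOf (0 : Fin 2) (MvPolynomial.X 1) :=
            add_le_add (degreeOf_aeval_X_le (0 : Fin 2) (r k)) (MvPolynomial.degreeOf_pow_le _ _ _)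
        _ ≤ h.natDegree - 1 := by
            rw [MvPolynomial.degreeOf_X, if_neg (by decide)]
            have := hr k
            omega
    refine lt_of_le_of_lt (le_trans (MvPolynomial.degreeOf_sum_le _ _ _)
      (Finset.sup_le fun k _ => hb k)) (by omega)
  · rw [e, map_sum]
    refine Finset.sum_congr rfl fun k _ => ?_
    rw [map_mul, map_pow, MvPolynomial.aeval_X, ← Polynomial.aeval_algHom_apply,
      MvPolynomial.aeval_X]
    simp [Polynomial.aeval_X_left_apply]
end
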